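/- Finiteness of the set of b-maximal outcomes: Let M be an RB-CGS# (with S finite), A a nonempty coalition, F_A a strategy for A, b a resource bound, and s a state. Then the set out(s, F_A, b) of b-maximal computations from s consistent with F_A is finite. -/

import Mathlib

/-- A resource-bounded concurrent game structure with a diminishing resource (RB-CGS#). -/
structure RBCGS (Agt S Act Res : Type) where
  /-- available actions for each agent in each state -/
  d : S → Agt → Set Act
  d_ne : ∀ s a, (d s a).Nonempty
  /-- cost function (negative = consumption, positive = production) -/
  cost : S → Act → Res → ℤ
  /-- the distinguished diminishing resource (the "first" resource) -/
  res1 : Res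
  /-- every available action consumes at least one unit of the diminishing resource -/
  cost_first : ∀ s (a : Agt) (α : Act), α ∈ d s a → cost s α res1 ≤ -1
  /-- partial transition function on joint actions -/
  tr : S → (Agt → Act) → Option S

namespace RBCGS

variable {Agt S Act Res : Type}

/-- consumption of resource ρ by action α at state s : `|min(0, c(s,α))|`. -/
def consR (M : RBCGS Agt S Act Res) (s : S) (α : Act) (ρ : Res) : ℕ :=
  (min 0 (M.cost s α ρ)).natAbs

/-- production of resource ρ by action α at state s : `max(0, c(s,α))`. -/
def prodR (M : RBCGS Agt S Act Res) (s : S) (α : Act) (ρ : Res) : ℕ :=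
  (max 0 (M.cost s α ρ)).toNat

/-- σ is a (projection of a) joint action for coalition A at state s. -/
def JointAt (M : RBCGS Agt S Act Res) (A : Set Agt) (s : S) (σ : Agt → Act) : Prop :=
  ∀ a ∈ A, σ a ∈ M.d s a

/-- outcomes of a joint action of coalition A at state s. -/
def outA (M : RBCGS Agt S Act Res) (A : Set Agt) (s : S) (σA : Agt → Act) : Set S :=
  { s' | ∃ σ : Agt → Act, (∀ a, σ a ∈ M.d s a) ∧ (∀ a ∈ A, σ a = σA a) ∧
    M.tr s σ = some s' }

variable [Inhabited S]

/-- F is a strategy for coalition A : on every nonempty history it prescribes a joint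
action available to A at the last state of the history. -/
def Strategy (M : RBCGS Agt S Act Res) (A : Set Agt) (F : List S → Agt → Act) : Prop :=
  ∀ l : List S, l ≠ [] → M.JointAt A (l.getD (l.length - 1) default) (F l)

/-- l is a (finite, nonempty) computation starting at s consistent with strategy F
(the computation `λ[1..k]` is represented 0-based as `l[0..k-1]`). -/
def ConsistentFrom (M : RBCGS Agt S Act Res) (A : Set Agt) (F : List S → Agt → Act)
    (s : S) (l : List S) : Prop :=
  l ≠ [] ∧ l.getD 0 default = s ∧
    ∀ i, i + 1 < l.length →
      l.getD (i + 1) default ∈ M.outA A (l.getD i default) (F (l.take (i + 1)))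

/-- `eAvail M F b l i a ρ` is the amount `e_a(λ[i+1])` of resource ρ available to a
after i steps of l under strategy F with initial bound b. -/
def eAvail (M : RBCGS Agt S Act Res) (F : List S → Agt → Act)
    (b : Agt → Res → ℕ) (l : List S) : ℕ → Agt → Res → ℤ
  | 0 => fun a ρ => (b a ρ : ℤ)
  | i + 1 => fun a ρ =>
      eAvail M F b l i a ρ
        - (M.consR (l.getD i default) (F (l.take (i + 1)) a) ρ : ℤ)
        + (M.prodR (l.getD i default) (F (l.take (i + 1)) a) ρ : ℤ)

/-- l is b-consistent with strategy F for coalition A. -/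
def BConsistent (M : RBCGS Agt S Act Res) (A : Set Agt) (F : List S → Agt → Act)
    (b : Agt → Res → ℕ) (l : List S) : Prop :=
  ∀ a ∈ A, ∀ i, i + 1 < l.length → ∀ ρ,
    (M.consR (l.getD i default) (F (l.take (i + 1)) a) ρ : ℤ) ≤ M.eAvail F b l i a ρ

/-- l is a b-maximal computation from s consistent with F. -/
def BMaximal (M : RBCGS Agt S Act Res) (A : Set Agt) (F : List S → Agt → Act)
    (b : Agt → Res → ℕ) (s : S) (l : List S) : Prop :=
  M.ConsistentFrom A F s l ∧ M.BConsistent A F b l ∧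
    ¬ ∃ l' : List S, l <+: l' ∧ l.length < l'.length ∧
        M.ConsistentFrom A F s l' ∧ M.BConsistent A F b l'

/-- `out(s, F_A, b)` : the set of b-maximal computations from s consistent with F. -/
def outSet (M : RBCGS Agt S Act Res) (A : Set Agt) (F : List S → Agt → Act)
    (b : Agt → Res → ℕ) (s : S) : Set (List S) :=
  { l | M.BMaximal A F b s l }

end RBCGS

/-! Each move of a coalition member consumes at least one unit of the diminishing resource and
produces none of it, so along a b-consistent computation that member's stock drops by one per
step and the computation has at most `b a res1 + 1` states. Over a finite state space there
are only finitely many such lists. -/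

namespace RBCGS

variable {Agt S Act Res : Type} (M : RBCGS Agt S Act Res)

theorem one_le_consR_res1 {s : S} {a : Agt} {α : Act} (hα : α ∈ M.d s a) :
    1 ≤ M.consR s α M.res1 := by
  have := M.cost_first s a α hα
  unfold consR
  omega

theorem prodR_res1_eq_zero {s : S} {a : Agt} {α : Act} (hα : α ∈ M.d s a) :
    M.prodR s α M.res1 = 0 := by
  have := M.cost_first s a α hα
  unfold prodR
  omega

variable [Inhabited S] {M} {A : Set Agt} {F : List S → Agt → Act}

theorem Strategy.mem_d_of_lt_length (hF : M.Strategy A F) {a : Agt} (ha : a ∈ A)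
    {l : List S} {i : ℕ} (hi : i < l.length) :
    F (l.take (i + 1)) a ∈ M.d (l.getD i default) a := by
  have hne : l.take (i + 1) ≠ [] := by
    simp [List.ne_nil_of_length_pos (by omega : 0 < l.length)]
  rw [List.getD_eq_getElem _ _ hi]
  simpa [Nat.min_eq_left hi] using hF _ hne a ha

theorem Strategy.eAvail_res1_le (hF : M.Strategy A F) (b : Agt → Res → ℕ) {a : Agt}
    (ha : a ∈ A) {l : List S} : ∀ i ≤ l.length, M.eAvail F b l i a M.res1 ≤ b a M.res1 - i
  | 0, _ => by simp [eAvail]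
  | i + 1, hi => by
    have hmem := hF.mem_d_of_lt_length ha (Nat.lt_of_succ_le hi)
    have ih := hF.eAvail_res1_le b ha (l := l) i (by omega)
    have hcons := M.one_le_consR_res1 hmem
    simp only [eAvail, M.prodR_res1_eq_zero hmem]
    push_cast
    omega

theorem Strategy.length_le_of_bConsistent (hF : M.Strategy A F) {b : Agt → Res → ℕ}
    {a : Agt} (ha : a ∈ A) {l : List S} (hl : M.BConsistent A F b l) :
    l.length ≤ b a M.res1 + 1 := by
  by_contra! hlong
  have hi : l.length - 2 < l.length := by omega
  have hcons := M.one_le_consR_res1 (hF.mem_d_of_lt_length ha hi)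
  have hle := hl a ha (l.length - 2) (by omega) M.res1
  have havail := hF.eAvail_res1_le b ha _ hi.le
  omega

end RBCGS

/-- Finiteness of the set of b-maximal outcomes (S finite). -/
theorem outSet_finite {Agt S Act Res : Type} [Inhabited S] [Fintype S]
    (M : RBCGS Agt S Act Res) (A : Set Agt) (hA : A.Nonempty)
    (F : List S → Agt → Act) (hF : M.Strategy A F)
    (b : Agt → Res → ℕ) (s : S) :
    (M.outSet A F b s).Finite := by
  obtain ⟨a, ha⟩ := hA
  exact (List.finite_length_le S (b a M.res1 + 1)).subset fun l hl =>
    hF.length_le_of_bConsistent ha hl.2.1
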